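/- arXiv:1810.05659 — 4 statements merged into one kernel-verified Lean document; each statement's English description precedes it below -/
import Mathlib

section
/- Let K be a maximal clique (a clique not properly contained in any other clique) of the offer conflict graph G_O of a MOAP instance, and suppose K contains two offers a, b with dem a ≠ dem b. Then there is a vehicle v ∈ V such that every offer o ∈ K satisfies veh o = some v; in particular K ⊆ O^v. -/
/-- The offer conflict graph `G_O` of a MOAP instance: distinct offers are adjacent iff
they belong to the same demand, or they require the same vehicle and their half-open
absence intervals intersect. -/
def offerGraph {D V O : Type*} (dem : O → D) (veh : O → Option V) (a b : O → ℝ) :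
    SimpleGraph O where
  Adj o o' := o ≠ o' ∧ (dem o = dem o' ∨
    ∃ v : V, veh o = some v ∧ veh o' = some v ∧
      (Set.Ico (a o) (b o) ∩ Set.Ico (a o') (b o')).Nonempty)
  symm := ⟨by
    rintro o o' ⟨hne, h⟩
    refine ⟨hne.symm, ?_⟩
    rcases h with h | ⟨v, h1, h2, h3⟩
    · exact Or.inl h.symm
    · exact Or.inr ⟨v, h2, h1, by rwa [Set.inter_comm] at h3⟩⟩
  loopless := ⟨fun o h => h.1 rfl⟩

/-- A maximal clique: a clique not properly contained in any other clique. -/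
def IsMaxClique {α : Type*} (G : SimpleGraph α) (K : Set α) : Prop :=
  G.IsClique K ∧ ∀ K' : Set α, G.IsClique K' → K ⊆ K' → K' = K

section OfferGraph

variable {D V O : Type*} {dem : O → D} {veh : O → Option V} {a b : O → ℝ}

theorem offerGraph_exists_veh_of_adj_of_dem_ne {o o' : O}
    (hadj : (offerGraph dem veh a b).Adj o o') (hdem : dem o ≠ dem o') :
    ∃ v : V, veh o = some v ∧ veh o' = some v := by
  obtain ⟨-, h | ⟨v, hv, hv', -⟩⟩ := hadj
  · exact absurd h hdem
  · exact ⟨v, hv, hv'⟩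

theorem offerGraph_veh_eq_of_adj_of_dem_ne {o o' : O} {v : V}
    (hadj : (offerGraph dem veh a b).Adj o o') (hdem : dem o ≠ dem o')
    (hv : veh o' = some v) : veh o = some v := by
  obtain ⟨w, hw, hw'⟩ := offerGraph_exists_veh_of_adj_of_dem_ne hadj hdem
  rwa [hw, ← hw']

/-- Every offer of the clique differs in demand from `o` or from `o'`, hence shares their
vehicle. -/
theorem offerGraph_veh_eq_of_isClique {K : Set O} (hK : (offerGraph dem veh a b).IsClique K)
    {o o' : O} (ho : o ∈ K) (ho' : o' ∈ K) (hdem : dem o ≠ dem o') {v : V}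
    (hv : veh o = some v) (hv' : veh o' = some v) {p : O} (hp : p ∈ K) :
    veh p = some v := by
  by_cases hpo : dem p = dem o
  · have hpo' : dem p ≠ dem o' := hpo ▸ hdem
    exact offerGraph_veh_eq_of_adj_of_dem_ne (hK hp ho' (ne_of_apply_ne dem hpo')) hpo' hv'
  · exact offerGraph_veh_eq_of_adj_of_dem_ne (hK hp ho (ne_of_apply_ne dem hpo)) hpo hv

end OfferGraph

theorem maxClique_of_two_demands_subset_vehicle_general {D V O : Type*}
    (dem : O → D) (veh : O → Option V) (a b : O → ℝ)
    (K : Set O) (hK : IsMaxClique (offerGraph dem veh a b) K)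
    (oa ob : O) (hoa : oa ∈ K) (hob : ob ∈ K) (hdiff : dem oa ≠ dem ob) :
    ∃ v : V, ∀ o ∈ K, veh o = some v := by
  obtain ⟨v, hva, hvb⟩ :=
    offerGraph_exists_veh_of_adj_of_dem_ne (hK.1 hoa hob (ne_of_apply_ne dem hdiff)) hdiff
  exact ⟨v, fun o ho => offerGraph_veh_eq_of_isClique hK.1 hoa hob hdiff hva hvb ho⟩

/-- If a maximal clique `K` of the offer conflict graph contains two offers of different
demands, then there is a vehicle `v` such that every offer in `K` requires `v`;
in particular `K ⊆ O^v`. -/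
theorem maxClique_of_two_demands_subset_vehicle {D V O : Type*}
    [Fintype D] [Fintype V] [Fintype O]
    (dem : O → D) (veh : O → Option V) (a b : O → ℝ)
    (hab : ∀ o, a o < b o) (hdem : ∀ d : D, ∃ o, dem o = d)
    (K : Set O) (hK : IsMaxClique (offerGraph dem veh a b) K)
    (oa ob : O) (hoa : oa ∈ K) (hob : ob ∈ K) (hdiff : dem oa ≠ dem ob) :
    ∃ v : V, ∀ o ∈ K, veh o = some v :=
  maxClique_of_two_demands_subset_vehicle_general dem veh a b K hK oa ob hoa hob hdiff
end

section
/- Let (I_i)_{i ∈ N} be a finite family of half-open intervals I_i = [a_i, b_i) ⊆ ℝ with a_i < b_i, and let G be the corresponding interval graph. The map sending each nonempty maximal clique K of G (a clique not properly contained in any other clique) to the real number max_{i ∈ K} a_i is injective on the set of maximal cliques. -/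
/-- The interval graph of a family of half-open intervals `[a i, b i)`:
distinct indices are adjacent iff their intervals intersect. -/
def intervalGraph {N : Type*} (a b : N → ℝ) : SimpleGraph N where
  Adj i j := i ≠ j ∧ (Set.Ico (a i) (b i) ∩ Set.Ico (a j) (b j)).Nonempty
  symm := by
    constructor
    rintro i j ⟨hne, h⟩
    exact ⟨hne.symm, by rwa [Set.inter_comm] at h⟩
  loopless := ⟨fun i h => h.1 rfl⟩

/-- A maximal clique (as a finite set of vertices): a clique not properly contained in any
other clique. -/
def IsMaxCliqueF {α : Type*} (G : SimpleGraph α) (K : Finset α) : Prop :=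
  G.IsClique ↑K ∧ ∀ K' : Finset α, G.IsClique ↑K' → K ⊆ K' → K' = K

/-!
The intervals of a clique pairwise meet, so the largest left endpoint `x` of a clique lies in
every one of its intervals (the interval attaining it is nonempty, and every other interval
meets it at a point `≥ x`). Conversely all intervals containing a common point form a clique.
Hence a maximal clique consists of exactly the intervals containing its largest left endpoint,
and is determined by that number.
-/

namespace intervalGraph

variable {N : Type*} {a b : N → ℝ}

theorem isClique_setOf_mem_Ico (x : ℝ) :
    (intervalGraph a b).IsClique {i | x ∈ Set.Ico (a i) (b i)} :=
  fun _ hi _ hj hne => ⟨hne, x, hi, hj⟩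

theorem sup'_mem_Ico_of_isClique (hab : ∀ i, a i < b i) {K : Finset N}
    (hK : (intervalGraph a b).IsClique ↑K) (h : K.Nonempty) {i : N} (hi : i ∈ K) :
    K.sup' h a ∈ Set.Ico (a i) (b i) := by
  refine ⟨K.le_sup' a hi, ?_⟩
  obtain ⟨j, hjK, hj⟩ := K.exists_mem_eq_sup' h a
  rw [hj]
  rcases eq_or_ne i j with rfl | hne
  · exact hab i
  · obtain ⟨-, t, ⟨-, hti⟩, hjt, -⟩ := hK hi hjK hne
    exact hjt.trans_lt hti

theorem mem_iff_sup'_mem_Ico_of_isMaxCliqueF (hab : ∀ i, a i < b i) {K : Finset N}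
    (hK : IsMaxCliqueF (intervalGraph a b) K) (h : K.Nonempty) {i : N} :
    i ∈ K ↔ K.sup' h a ∈ Set.Ico (a i) (b i) := by
  classical
  refine ⟨sup'_mem_Ico_of_isClique hab hK.1 h, fun hx => ?_⟩
  have hclique : (intervalGraph a b).IsClique ↑(insert i K) := by
    refine (isClique_setOf_mem_Ico (K.sup' h a)).subset ?_
    intro j hj
    rcases Finset.mem_insert.1 hj with rfl | hjK
    · exact hx
    · exact sup'_mem_Ico_of_isClique hab hK.1 h hjK
  rw [← hK.2 _ hclique (Finset.subset_insert i K)]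
  exact Finset.mem_insert_self i K

end intervalGraph

theorem maxClique_injective_on_maxLeft_general {N : Type*}
    (a b : N → ℝ) (hab : ∀ i, a i < b i)
    (K₁ K₂ : Finset N) (h₁ : K₁.Nonempty) (h₂ : K₂.Nonempty)
    (hm₁ : IsMaxCliqueF (intervalGraph a b) K₁)
    (hm₂ : IsMaxCliqueF (intervalGraph a b) K₂)
    (heq : K₁.sup' h₁ a = K₂.sup' h₂ a) :
    K₁ = K₂ := by
  ext i
  rw [intervalGraph.mem_iff_sup'_mem_Ico_of_isMaxCliqueF hab hm₁ h₁,
    intervalGraph.mem_iff_sup'_mem_Ico_of_isMaxCliqueF hab hm₂ h₂, heq]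

/-- The map sending each nonempty maximal clique `K` of the interval graph of a finite
family of half-open intervals `[a i, b i)` (with `a i < b i`) to `max_{i ∈ K} a i` is
injective on maximal cliques. -/
theorem maxClique_injective_on_maxLeft {N : Type*} [Fintype N] [DecidableEq N]
    (a b : N → ℝ) (hab : ∀ i, a i < b i)
    (K₁ K₂ : Finset N) (h₁ : K₁.Nonempty) (h₂ : K₂.Nonempty)
    (hm₁ : IsMaxCliqueF (intervalGraph a b) K₁)
    (hm₂ : IsMaxCliqueF (intervalGraph a b) K₂)
    (heq : K₁.sup' h₁ a = K₂.sup' h₂ a) :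
    K₁ = K₂ :=
  maxClique_injective_on_maxLeft_general a b hab K₁ K₂ h₁ h₂ hm₁ hm₂ heq
end

section
/- Consider an ISMA instance with machines i = 1,…,m having availability intervals [α_i, β_i] and jobs j = 1,…,n with processing intervals [s_j, f_j] (all reals, with α_i ≤ β_i and s_j < f_j). Construct a MOAP instance whose demands are the jobs and whose vehicles are the machines, where for each job j and each machine i with [s_j, f_j] ⊆ [α_i, β_i] there is an offer with cost 0, vehicle i, and absence interval [s_j, f_j], and additionally for each job j there is an offer with cost 1 requiring no vehicle and absence interval [s_j, f_j]. Then the ISMA instance admits a feasible schedule — an assignment σ of jobs to machines with [s_j, f_j] ⊆ [α_{σ(j)}, β_{σ(j)}] for every job j, and [s_j, f_j] ∩ [s_k, f_k] = ∅ for all distinct jobs j, k with σ(j) = σ(k) — if and only if the constructed MOAP instance admits a feasible selection (exactly one offer per demand such that any two distinct selected offers requiring the same vehicle have disjoint absence intervals) of total cost strictly less than 1. -/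
/-- Offers of the MOAP instance constructed from an ISMA instance which require a vehicle:
pairs of a job `j` and a machine `i` such that `[s j, f j] ⊆ [α i, β i]`. -/
abbrev ISMAVehOffer {m n : ℕ} (α β : Fin m → ℝ) (s f : Fin n → ℝ) : Type :=
  {p : Fin n × Fin m // Set.Icc (s p.1) (f p.1) ⊆ Set.Icc (α p.2) (β p.2)}

/-- Offers of the MOAP instance constructed from an ISMA instance: for each job `j` and
each machine `i` within whose availability interval the job fits, an offer (left summand),
and additionally for each job one offer requiring no vehicle (right summand). -/
abbrev ISMAOffer {m n : ℕ} (α β : Fin m → ℝ) (s f : Fin n → ℝ) : Type :=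
  ISMAVehOffer α β s f ⊕ Fin n

/-- The demand (job) of an offer of the constructed MOAP instance. -/
def ismaDem {m n : ℕ} (α β : Fin m → ℝ) (s f : Fin n → ℝ) :
    ISMAOffer α β s f → Fin n :=
  Sum.elim (fun p => p.1.1) id

/-- The vehicle (machine) required by an offer of the constructed MOAP instance
(`none` for the no-vehicle offers). -/
def ismaVeh {m n : ℕ} (α β : Fin m → ℝ) (s f : Fin n → ℝ) :
    ISMAOffer α β s f → Option (Fin m) :=
  Sum.elim (fun p => some p.1.2) (fun _ => none)

/-- The cost of an offer of the constructed MOAP instance: `0` for offers requiring a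
machine, `1` for the no-vehicle offers. -/
def ismaCost {m n : ℕ} (α β : Fin m → ℝ) (s f : Fin n → ℝ) :
    ISMAOffer α β s f → ℝ :=
  Sum.elim (fun _ => 0) (fun _ => 1)

/-- The absence interval of an offer of the constructed MOAP instance: the processing
interval `[s j, f j]` of its job `j`. -/
def ismaInterval {m n : ℕ} (α β : Fin m → ℝ) (s f : Fin n → ℝ)
    (o : ISMAOffer α β s f) : Set ℝ :=
  Set.Icc (s (ismaDem α β s f o)) (f (ismaDem α β s f o))

/-!
A feasible schedule `σ` is the same thing as a feasible selection using only the cost-`0`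
offers `(j, σ j)`, and since every cost is `0` or `1`, a selection costs less than `1`
exactly when it avoids the cost-`1` no-vehicle offers.
-/

namespace ISMA

open Finset Set

variable {m n : ℕ} {α β : Fin m → ℝ} {s f : Fin n → ℝ}

variable (α β s f) in
def IsFeasibleSchedule (σ : Fin n → Fin m) : Prop :=
  (∀ j, Icc (s j) (f j) ⊆ Icc (α (σ j)) (β (σ j))) ∧
    ∀ j k, j ≠ k → σ j = σ k → Icc (s j) (f j) ∩ Icc (s k) (f k) = ∅

def IsFeasibleSelection (S : Finset (ISMAOffer α β s f)) : Prop :=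
  (∀ j : Fin n, ∃! o, o ∈ S ∧ ismaDem α β s f o = j) ∧
    ∀ o ∈ S, ∀ o' ∈ S, o ≠ o' → ∀ v : Fin m,
      ismaVeh α β s f o = some v → ismaVeh α β s f o' = some v →
      ismaInterval α β s f o ∩ ismaInterval α β s f o' = ∅

theorem sum_ismaCost_lt_one_iff (S : Finset (ISMAOffer α β s f)) :
    ∑ o ∈ S, ismaCost α β s f o < 1 ↔ ∀ j, Sum.inr j ∉ S := by
  constructor
  · intro hcost j hj
    have hle : 1 ≤ ∑ o ∈ S, ismaCost α β s f o :=
      single_le_sum (f := ismaCost α β s f) (fun o _ => by cases o <;> simp [ismaCost]) hj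
    linarith
  · intro hinr
    have hzero : ∀ o ∈ S, ismaCost α β s f o = 0 := by
      rintro (p | j) ho
      · rfl
      · exact absurd ho (hinr j)
    rw [sum_eq_zero hzero]
    exact zero_lt_one

def selectionOfSchedule (σ : Fin n → Fin m)
    (hσ : ∀ j, Icc (s j) (f j) ⊆ Icc (α (σ j)) (β (σ j))) : Finset (ISMAOffer α β s f) :=
  univ.image fun j => Sum.inl ⟨(j, σ j), hσ j⟩

section selectionOfSchedule

variable {σ : Fin n → Fin m} {hσ : ∀ j, Icc (s j) (f j) ⊆ Icc (α (σ j)) (β (σ j))}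

theorem mem_selectionOfSchedule {o : ISMAOffer α β s f} :
    o ∈ selectionOfSchedule σ hσ ↔ ∃ j, Sum.inl ⟨(j, σ j), hσ j⟩ = o := by
  simp [selectionOfSchedule]

theorem inr_notMem_selectionOfSchedule (j : Fin n) :
    Sum.inr j ∉ selectionOfSchedule σ hσ := by
  simp [mem_selectionOfSchedule]

theorem isFeasibleSelection_selectionOfSchedule
    (hdisj : ∀ j k, j ≠ k → σ j = σ k → Icc (s j) (f j) ∩ Icc (s k) (f k) = ∅) :
    IsFeasibleSelection (selectionOfSchedule σ hσ) := by
  refine ⟨fun j => ⟨_, ⟨mem_selectionOfSchedule.2 ⟨j, rfl⟩, rfl⟩, ?_⟩, ?_⟩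
  · rintro o ⟨ho, rfl⟩
    obtain ⟨k, rfl⟩ := mem_selectionOfSchedule.1 ho
    rfl
  · intro o ho o' ho' hne v hv hv'
    obtain ⟨j, rfl⟩ := mem_selectionOfSchedule.1 ho
    obtain ⟨k, rfl⟩ := mem_selectionOfSchedule.1 ho'
    have hjk : j ≠ k := by rintro rfl; exact hne rfl
    simp only [ismaVeh, Sum.elim_inl, Option.some.injEq] at hv hv'
    exact hdisj j k hjk (hv.trans hv'.symm)

end selectionOfSchedule

namespace IsFeasibleSelection

variable {S : Finset (ISMAOffer α β s f)}

theorem exists_inl_mem (hS : IsFeasibleSelection S) (hinr : ∀ j, Sum.inr j ∉ S) (j : Fin n) :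
    ∃ p : ISMAVehOffer α β s f, Sum.inl p ∈ S ∧ p.1.1 = j := by
  obtain ⟨o, ⟨hoS, hoj⟩, -⟩ := hS.1 j
  rcases o with p | k
  · exact ⟨p, hoS, hoj⟩
  · exact absurd hoS (hinr k)

theorem exists_isFeasibleSchedule (hS : IsFeasibleSelection S) (hinr : ∀ j, Sum.inr j ∉ S) :
    ∃ σ, IsFeasibleSchedule α β s f σ := by
  choose p hpS hpj using hS.exists_inl_mem hinr
  refine ⟨fun j => (p j).1.2, fun j => by simpa only [hpj j] using (p j).2, fun j k hjk hσ => ?_⟩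
  have hne : (Sum.inl (p j) : ISMAOffer α β s f) ≠ Sum.inl (p k) := fun h => hjk <| by
    simpa [ismaDem, hpj] using congrArg (ismaDem α β s f) h
  have h := hS.2 _ (hpS j) _ (hpS k) hne (p j).1.2 rfl (congrArg some hσ.symm)
  simpa [ismaInterval, ismaDem, hpj] using h

end IsFeasibleSelection

end ISMA

open ISMA in
theorem isma_iff_moap_general {m n : ℕ} (α β : Fin m → ℝ) (s f : Fin n → ℝ) :
    (∃ σ : Fin n → Fin m,
        (∀ j, Set.Icc (s j) (f j) ⊆ Set.Icc (α (σ j)) (β (σ j))) ∧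
        (∀ j k, j ≠ k → σ j = σ k →
          Set.Icc (s j) (f j) ∩ Set.Icc (s k) (f k) = ∅)) ↔
    (∃ S : Finset (ISMAOffer α β s f),
        (∀ j : Fin n, ∃! o, o ∈ S ∧ ismaDem α β s f o = j) ∧
        (∀ o ∈ S, ∀ o' ∈ S, o ≠ o' → ∀ v : Fin m,
          ismaVeh α β s f o = some v → ismaVeh α β s f o' = some v →
          ismaInterval α β s f o ∩ ismaInterval α β s f o' = ∅) ∧
        (∑ o ∈ S, ismaCost α β s f o) < 1) := by
  constructor
  · rintro ⟨σ, hfit, hdisj⟩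
    have hS := isFeasibleSelection_selectionOfSchedule (hσ := hfit) hdisj
    exact ⟨_, hS.1, hS.2, (sum_ismaCost_lt_one_iff _).2 inr_notMem_selectionOfSchedule⟩
  · rintro ⟨S, hdem, hdisj, hcost⟩
    exact IsFeasibleSelection.exists_isFeasibleSchedule ⟨hdem, hdisj⟩
      ((sum_ismaCost_lt_one_iff S).1 hcost)

/-- An ISMA instance (machines `i` available on `[α i, β i]`, jobs `j` processed on
`[s j, f j]`) admits a feasible schedule iff the MOAP instance constructed from it admits
a feasible selection (exactly one offer per demand, selected offers requiring the same
vehicle have disjoint absence intervals) of total cost strictly less than `1`. -/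
theorem isma_iff_moap {m n : ℕ} (α β : Fin m → ℝ) (s f : Fin n → ℝ)
    (hαβ : ∀ i, α i ≤ β i) (hsf : ∀ j, s j < f j) :
    (∃ σ : Fin n → Fin m,
        (∀ j, Set.Icc (s j) (f j) ⊆ Set.Icc (α (σ j)) (β (σ j))) ∧
        (∀ j k, j ≠ k → σ j = σ k →
          Set.Icc (s j) (f j) ∩ Set.Icc (s k) (f k) = ∅)) ↔
    (∃ S : Finset (ISMAOffer α β s f),
        (∀ j : Fin n, ∃! o, o ∈ S ∧ ismaDem α β s f o = j) ∧
        (∀ o ∈ S, ∀ o' ∈ S, o ≠ o' → ∀ v : Fin m,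
          ismaVeh α β s f o = some v → ismaVeh α β s f o' = some v →
          ismaInterval α β s f o ∩ ismaInterval α β s f o' = ∅) ∧
        (∑ o ∈ S, ismaCost α β s f o) < 1) :=
  isma_iff_moap_general α β s f
end

section
/- Let (I_i)_{i ∈ N} be a finite family of half-open intervals I_i = [a_i, b_i) ⊆ ℝ with a_i < b_i, and let m be a positive integer. If every point t ∈ ℝ is contained in at most m of the intervals, then there exists a coloring f : N → Fin m such that f(i) ≠ f(j) whenever i ≠ j and I_i ∩ I_j ≠ ∅. (This yields the assignment of selected abstract mobility offers of a vehicle class to the individual vehicles of that class.) -/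
/-!
Order the intervals by left endpoint. If `i` has the largest left endpoint among a set of
intervals, every interval of the set meeting `I i` contains the point `a i`, and so does `I i`;
hence `I i` meets fewer than `m` others. The intersection graph is therefore
`(m - 1)`-degenerate, and greedy colouring (remove such an `i`, colour the rest, give `i` a
colour unused by its neighbours) uses at most `m` colours.
-/

open Finset

namespace SimpleGraph

variable {V : Type*} {G : SimpleGraph V} [DecidableRel G.Adj] {m : ℕ}

theorem exists_update_forall_adj_ne [DecidableEq V] {s : Finset V} {v : V} {c : V → Fin m}
    (hc : ∀ x ∈ s.erase v, ∀ y ∈ s.erase v, G.Adj x y → c x ≠ c y)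
    (hv : #{w ∈ s | G.Adj v w} < m) :
    ∃ k, ∀ x ∈ s, ∀ y ∈ s, G.Adj x y →
      Function.update c v k x ≠ Function.update c v k y := by
  obtain ⟨k, -, hk⟩ : ∃ k ∈ (univ : Finset (Fin m)), k ∉ image c {w ∈ s | G.Adj v w} :=
    exists_mem_notMem_of_card_lt_card <| by
      rw [card_univ, Fintype.card_fin]
      exact card_image_le.trans_lt hv
  refine ⟨k, fun x hx y hy hxy => ?_⟩
  rcases eq_or_ne x v with rfl | hxv
  · rw [Function.update_self, Function.update_of_ne hxy.ne.symm]
    exact fun h => hk (mem_image.2 ⟨y, mem_filter.2 ⟨hy, hxy⟩, h.symm⟩)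
  rcases eq_or_ne y v with rfl | hyv
  · rw [Function.update_self, Function.update_of_ne hxv]
    exact fun h => hk (mem_image.2 ⟨x, mem_filter.2 ⟨hx, hxy.symm⟩, h⟩)
  rw [Function.update_of_ne hxv, Function.update_of_ne hyv]
  exact hc x (mem_erase.2 ⟨hxv, hx⟩) y (mem_erase.2 ⟨hyv, hy⟩) hxy

theorem exists_forall_adj_ne_on_of_forall_exists_card_adj_lt [DecidableEq V] [NeZero m]
    (hdeg : ∀ s : Finset V, s.Nonempty → ∃ v ∈ s, #{w ∈ s | G.Adj v w} < m)
    (s : Finset V) :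
    ∃ c : V → Fin m, ∀ x ∈ s, ∀ y ∈ s, G.Adj x y → c x ≠ c y := by
  induction s using Finset.strongInduction with
  | H s ih =>
    rcases s.eq_empty_or_nonempty with rfl | hs
    · exact ⟨fun _ => 0, by simp⟩
    obtain ⟨v, hvs, hv⟩ := hdeg s hs
    obtain ⟨c, hc⟩ := ih (s.erase v) (erase_ssubset hvs)
    obtain ⟨k, hk⟩ := exists_update_forall_adj_ne hc hv
    exact ⟨_, hk⟩

theorem colorable_of_forall_exists_card_adj_lt [Fintype V]
    (hdeg : ∀ s : Finset V, s.Nonempty → ∃ v ∈ s, #{w ∈ s | G.Adj v w} < m) :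
    G.Colorable m := by
  classical
  rcases eq_or_ne m 0 with rfl | hm
  · have : IsEmpty V := ⟨fun v => by simpa using hdeg {v} (singleton_nonempty v)⟩
    exact Colorable.of_isEmpty 0
  · have := NeZero.mk hm
    obtain ⟨c, hc⟩ := exists_forall_adj_ne_on_of_forall_exists_card_adj_lt hdeg univ
    exact ⟨Coloring.mk c fun h => hc _ (mem_univ _) _ (mem_univ _) h⟩

end SimpleGraph

def intersectionGraph {ι α : Type*} (s : ι → Set α) : SimpleGraph ι where
  Adj i j := i ≠ j ∧ (s i ∩ s j).Nonempty
  symm := ⟨fun _ _ h => ⟨h.1.symm, Set.inter_comm _ _ ▸ h.2⟩⟩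
  loopless := ⟨fun _ h => h.1 rfl⟩

@[simp]
theorem intersectionGraph_adj {ι α : Type*} {s : ι → Set α} {i j : ι} :
    (intersectionGraph s).Adj i j ↔ i ≠ j ∧ (s i ∩ s j).Nonempty :=
  Iff.rfl

theorem Set.left_mem_Ico_of_inter_nonempty {α : Type*} [LinearOrder α] {a b a' b' : α}
    (h : a' ≤ a) (hne : (Set.Ico a b ∩ Set.Ico a' b').Nonempty) : a ∈ Set.Ico a' b' :=
  let ⟨_, ⟨hat, _⟩, _, htb'⟩ := hne
  ⟨h, hat.trans_lt htb'⟩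

theorem intersectionGraph_Ico_exists_card_adj_lt {ι α : Type*} [Finite ι] [LinearOrder α]
    [DecidableEq ι] (a b : ι → α)
    [DecidableRel (intersectionGraph fun i => Set.Ico (a i) (b i)).Adj]
    (hab : ∀ i, a i < b i) {m : ℕ} (hcover : ∀ t, {i | t ∈ Set.Ico (a i) (b i)}.ncard ≤ m)
    (s : Finset ι) (hs : s.Nonempty) :
    ∃ v ∈ s, #{w ∈ s | (intersectionGraph fun i => Set.Ico (a i) (b i)).Adj v w} < m := by
  obtain ⟨v, hvs, hmax⟩ := s.exists_max_image a hs
  set nbrs := {w ∈ s | (intersectionGraph fun i => Set.Ico (a i) (b i)).Adj v w}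
  have hv : v ∉ nbrs := by simp [nbrs]
  have hsub : (↑(insert v nbrs) : Set ι) ⊆ {i | a v ∈ Set.Ico (a i) (b i)} := by
    intro w hw
    simp only [nbrs, coe_insert, coe_filter, Set.mem_insert_iff, Set.mem_ofPred_eq,
      intersectionGraph_adj] at hw
    rcases hw with rfl | ⟨hws, -, hne⟩
    · exact ⟨le_rfl, hab w⟩
    · exact Set.left_mem_Ico_of_inter_nonempty (hmax w hws) hne
  refine ⟨v, hvs, ?_⟩
  calc #nbrs < #(insert v nbrs) := card_lt_card (ssubset_insert hv)
    _ = (↑(insert v nbrs) : Set ι).ncard := (Set.ncard_coe_finset _).symm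
    _ ≤ {i | a v ∈ Set.Ico (a i) (b i)}.ncard := Set.ncard_le_ncard hsub
    _ ≤ m := hcover (a v)

theorem exists_interval_coloring_general {N : Type*} [Fintype N]
    (a b : N → ℝ) (hab : ∀ i, a i < b i) (m : ℕ)
    (hcover : ∀ t : ℝ, {i : N | t ∈ Set.Ico (a i) (b i)}.ncard ≤ m) :
    ∃ c : N → Fin m, ∀ i j : N, i ≠ j →
      (Set.Ico (a i) (b i) ∩ Set.Ico (a j) (b j)).Nonempty → c i ≠ c j := by
  classical
  obtain ⟨c⟩ := SimpleGraph.colorable_of_forall_exists_card_adj_lt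
    (intersectionGraph_Ico_exists_card_adj_lt a b hab hcover)
  exact ⟨c, fun _ _ hij hne => c.valid (intersectionGraph_adj.2 ⟨hij, hne⟩)⟩

/-- Interval graph coloring: given a finite family of half-open intervals `[a i, b i)`
with `a i < b i` and a positive integer `m` such that every point `t ∈ ℝ` is contained
in at most `m` of the intervals, there is a coloring of the intervals with `m` colors
such that distinct intersecting intervals receive different colors.  (The colors play
the role of the individual vehicles of a vehicle class with `m` interchangeable
vehicles.) -/
theorem exists_interval_coloring {N : Type*} [Fintype N]
    (a b : N → ℝ) (hab : ∀ i, a i < b i) (m : ℕ) (hm : 0 < m)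
    (hcover : ∀ t : ℝ, {i : N | t ∈ Set.Ico (a i) (b i)}.ncard ≤ m) :
    ∃ c : N → Fin m, ∀ i j : N, i ≠ j →
      (Set.Ico (a i) (b i) ∩ Set.Ico (a j) (b j)).Nonempty → c i ≠ c j :=
  exists_interval_coloring_general a b hab m hcover
end
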